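/- arXiv:2210.02125 — 3 statements merged into one kernel-verified Lean document; each statement's English description precedes it below -/
import Mathlib

section
/- Let T ≥ 4 be an integer and let p be a real number with p > 3 − T. Then ∫_0^1 x^p · (1/2)(T−1)(T−2)²(T−3) x^{T−4}(1 − x² + 2x·log x) dx = [(T−1)(T−2)²(T−3)] / [(T+p−1)(T+p−2)²(T+p−3)]. -/
/-!
With `a = p + T - 4 > -1` the integrand is `K / 2 * x ^ a * (1 - x ^ 2 + 2 * x * log x)`,
where `K = (T - 1) (T - 2)² (T - 3)`. Since `∫₀¹ x ^ a = 1 / (a + 1)` and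
`∫₀¹ x ^ b log x = -1 / (b + 1)²`, the integral is
`K / 2 * (1 / (a + 1) - 1 / (a + 3) - 2 / (a + 2)²) = K / ((a + 1) (a + 2)² (a + 3))`,
because `(a + 2)² - (a + 1) (a + 3) = 1`.
-/

open Real Set intervalIntegral

lemma continuousOn_log_mul_rpow {b : ℝ} (hb : 0 < b) :
    ContinuousOn (fun x : ℝ => log x * x ^ b) (Ici 0) := by
  intro x hx
  rcases (mem_Ici.mp hx).eq_or_lt with rfl | hx
  · rw [← continuousWithinAt_Ioi_iff_Ici]
    simpa [ContinuousWithinAt, zero_rpow hb.ne'] using tendsto_log_mul_rpow_nhdsGT_zero hb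
  · exact ((continuousAt_log hx.ne').mul
      (continuousAt_rpow_const x b (Or.inl hx.ne'))).continuousWithinAt

lemma continuousOn_log_mul_rpow_div_sub_rpow_div {b : ℝ} (hb : -1 < b) :
    ContinuousOn (fun x => log x * x ^ (b + 1) / (b + 1) - x ^ (b + 1) / (b + 1) ^ 2) (Ici 0) :=
  have hb1 : 0 < b + 1 := by linarith
  ((continuousOn_log_mul_rpow hb1).div_const _).sub
    ((continuous_rpow_const hb1.le).continuousOn.div_const _)

lemma hasDerivAt_log_mul_rpow_div_sub_rpow_div {b x : ℝ} (hb : b ≠ -1) (hx : 0 < x) :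
    HasDerivAt (fun x => log x * x ^ (b + 1) / (b + 1) - x ^ (b + 1) / (b + 1) ^ 2)
      (x ^ b * log x) x := by
  have hb1 : b + 1 ≠ 0 := fun h => hb (by linarith)
  have hpow : HasDerivAt (fun x : ℝ => x ^ (b + 1)) ((b + 1) * x ^ b) x := by
    simpa using hasDerivAt_rpow_const (x := x) (p := b + 1) (Or.inl hx.ne')
  refine ((((hasDerivAt_log hx.ne').mul hpow).div_const (b + 1)).sub
    (hpow.div_const ((b + 1) ^ 2))).congr_deriv ?_
  rw [rpow_add_one hx.ne']
  field_simp
  ring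

-- `x ^ b * log x` has constant sign on `(0, 1)` and a primitive continuous on `[0, 1]`.
lemma intervalIntegrable_rpow_mul_log {b : ℝ} (hb : -1 < b) :
    IntervalIntegrable (fun x => x ^ b * log x) MeasureTheory.volume 0 1 := by
  have h := integrableOn_deriv_of_nonneg
    ((continuousOn_log_mul_rpow_div_sub_rpow_div hb).mono Icc_subset_Ici_self).neg
    (fun x hx => (hasDerivAt_log_mul_rpow_div_sub_rpow_div hb.ne' hx.1).neg)
    fun x hx => neg_nonneg.mpr <|
      mul_nonpos_of_nonneg_of_nonpos (rpow_nonneg hx.1.le _) (log_nonpos hx.1.le hx.2.le)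
  simpa [intervalIntegrable_iff_integrableOn_Ioc_of_le zero_le_one] using h.neg

theorem integral_rpow_mul_log {b : ℝ} (hb : -1 < b) :
    ∫ x in (0 : ℝ)..1, x ^ b * log x = -((b + 1) ^ 2)⁻¹ := by
  rw [integral_eq_sub_of_hasDerivAt_of_le zero_le_one
    ((continuousOn_log_mul_rpow_div_sub_rpow_div hb).mono Icc_subset_Ici_self)
    (fun x hx => hasDerivAt_log_mul_rpow_div_sub_rpow_div hb.ne' hx.1)
    (intervalIntegrable_rpow_mul_log hb)]
  simp [zero_rpow (by linarith : b + 1 ≠ 0)]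

theorem integral_rpow_mul_one_sub_sq_add_two_mul_mul_log {a : ℝ} (ha : -1 < a) :
    ∫ x in (0 : ℝ)..1, x ^ a * (1 - x ^ 2 + 2 * x * log x) =
      2 / ((a + 1) * (a + 2) ^ 2 * (a + 3)) := by
  have hexpand : EqOn (fun x => x ^ a * (1 - x ^ 2 + 2 * x * log x))
      (fun x => x ^ a - x ^ (a + 2) + 2 * (x ^ (a + 1) * log x)) (Ioo 0 1) := by
    intro x hx
    simp only
    rw [rpow_add hx.1, rpow_add_one hx.1.ne', rpow_two]
    ring
  have i0 := intervalIntegrable_rpow' (a := 0) (b := 1) ha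
  have i2 := intervalIntegrable_rpow' (a := 0) (b := 1) (r := a + 2) (by linarith)
  have ilog := intervalIntegrable_rpow_mul_log (b := a + 1) (by linarith)
  rw [integral_congr_Ioo_of_le zero_le_one hexpand, integral_add (i0.sub i2) (ilog.const_mul 2),
    integral_sub i0 i2, integral_const_mul, integral_rpow_mul_log (by linarith),
    integral_rpow (Or.inl ha), integral_rpow (Or.inl (by linarith))]
  have h1 : a + 1 ≠ 0 := by linarith
  have h2 : a + 2 ≠ 0 := by linarith
  have h3 : a + 3 ≠ 0 := by linarith
  rw [show a + 1 + 1 = a + 2 by ring, show a + 2 + 1 = a + 3 by ring]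
  simp only [one_rpow, zero_rpow h1, zero_rpow h3]
  field_simp
  ring

theorem moments_pdf_M2
    (T : ℕ) (hT : 4 ≤ T) (p : ℝ) (hp : 3 - (T : ℝ) < p) :
    (∫ x in (0 : ℝ)..1,
        x ^ p * ((1 / 2) * ((T : ℝ) - 1) * ((T : ℝ) - 2) ^ 2 * ((T : ℝ) - 3) * x ^ (T - 4) *
          (1 - x ^ 2 + 2 * x * Real.log x)))
      = (((T : ℝ) - 1) * ((T : ℝ) - 2) ^ 2 * ((T : ℝ) - 3)) /
          (((T : ℝ) + p - 1) * ((T : ℝ) + p - 2) ^ 2 * ((T : ℝ) + p - 3)) := by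
  have hcast : ((T - 4 : ℕ) : ℝ) = T - 4 := by push_cast [Nat.cast_sub hT]; ring
  have hintegrand : EqOn (fun x : ℝ => x ^ p * ((1 / 2) * ((T : ℝ) - 1) * ((T : ℝ) - 2) ^ 2 *
      ((T : ℝ) - 3) * x ^ (T - 4) * (1 - x ^ 2 + 2 * x * log x)))
      (fun x => (((T : ℝ) - 1) * ((T : ℝ) - 2) ^ 2 * ((T : ℝ) - 3)) / 2 *
        (x ^ (p + (T - 4)) * (1 - x ^ 2 + 2 * x * log x))) (Ioo 0 1) := by
    intro x hx
    simp only
    rw [rpow_add hx.1, ← hcast, rpow_natCast]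
    ring
  rw [integral_congr_Ioo_of_le zero_le_one hintegrand, integral_const_mul,
    integral_rpow_mul_one_sub_sq_add_two_mul_mul_log (by linarith)]
  ring_nf
end

section
/- (Gilbert–Varshamov lower bound) Let T and M be positive integers with T ≥ 2M and let δ ∈ (0,1). Let μ be the Haar probability measure on U(T) and set c = μ{U ∈ U(T) : det(I_M − E^H U E E^H U^H E) ≤ δ}. If c > 0, then there exist an integer K with K ≥ 1/c and matrices X_1, …, X_K ∈ ℂ^{T×M} with X_i^H X_i = I_M for all i, such that det(I_M − X_i^H X_j X_j^H X_i) ≥ δ for all i ≠ j. -/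
open Matrix MeasureTheory

noncomputable instance {m n : ℕ} : MeasureSpace (Matrix (Fin m) (Fin n) ℂ) := by
  unfold Matrix; infer_instance

/-- The `T × M` matrix whose columns are the first `M` standard basis vectors of `ℂ^T`. -/
def stdFrame (T M : ℕ) : Matrix (Fin T) (Fin M) ℂ :=
  Matrix.of fun i j => if (i : ℕ) = (j : ℕ) then 1 else 0

/-!
Let `S = {U | chordalProduct E (U * E) ≤ δ}`. The chordal product is symmetric and invariant
under a common unitary change of frame, so `S⁻¹ = S` and `(U i)⁻¹ * U j ∉ S` says exactly that
the frames `U i * E` and `U j * E` are `δ`-far. Grow such a family greedily: while the translates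
`U i • S` miss some point `V`, the frame `V * E` can be added; once they cover `U(T)`, left
invariance of `μ` gives `1 ≤ K * μ S`. If the process never stops, families of every size
exist.
-/

open Pointwise

section Packing

variable {G : Type*} [Group G] {S : Set G}

theorem Pairwise.inv_mul_notMem_vecCons (hS : S⁻¹ = S) {n : ℕ} {g : Fin n → G}
    (hg : Pairwise fun i j => (g i)⁻¹ * g j ∉ S) {x : G} (hx : x ∉ ⋃ i, g i • S) :
    Pairwise fun i j => (vecCons x g i)⁻¹ * vecCons x g j ∉ S := by
  have hfar : ∀ i, (g i)⁻¹ * x ∉ S := fun i hi =>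
    hx (Set.mem_iUnion.2 ⟨i, Set.mem_smul_set_iff_inv_smul_mem.2 hi⟩)
  have hfar' : ∀ i, x⁻¹ * g i ∉ S := fun i hi =>
    hfar i (by rw [← hS, Set.mem_inv, _root_.mul_inv_rev, inv_inv]; exact hi)
  intro i j hij
  cases i using Fin.cases <;> cases j using Fin.cases
  · exact absurd rfl hij
  · simpa using hfar' _
  · simpa using hfar _
  · simpa using hg fun h => hij (congrArg Fin.succ h)

variable [MeasurableSpace G] {μ : Measure G} [IsProbabilityMeasure μ] [μ.IsMulLeftInvariant]

theorem inv_measure_le_card_of_univ_subset_iUnion_smul {ι : Type*} [Fintype ι]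
    {g : ι → G} (hcover : Set.univ ⊆ ⋃ i, g i • S) : (μ S)⁻¹ ≤ Fintype.card ι := by
  have hcard : 1 ≤ μ S * Fintype.card ι :=
    calc 1 = μ Set.univ := measure_univ.symm
      _ ≤ μ (⋃ i, g i • S) := measure_mono hcover
      _ ≤ ∑ i, μ (g i • S) := measure_iUnion_fintype_le μ _
      _ = μ S * Fintype.card ι := by simp [measure_smul, mul_comm]
  exact (ENNReal.inv_le_iff_le_mul (by simp) fun h => absurd h (measure_ne_top μ S)).2 hcard

theorem exists_pairwise_inv_mul_notMem (hS : S⁻¹ = S) (hpos : 0 < μ S) :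
    ∃ K : ℕ, (μ S)⁻¹ ≤ K ∧ ∃ g : Fin K → G, Pairwise fun i j => (g i)⁻¹ * g j ∉ S := by
  by_contra hnone
  have hgrow : ∀ n, ∃ g : Fin n → G, Pairwise fun i j => (g i)⁻¹ * g j ∉ S := by
    intro n
    induction n with
    | zero => exact ⟨Fin.elim0, fun i => i.elim0⟩
    | succ n ih =>
      obtain ⟨g, hg⟩ := ih
      have hnotcover : ¬Set.univ ⊆ ⋃ i, g i • S := fun hcover =>
        hnone ⟨n, by simpa using inv_measure_le_card_of_univ_subset_iUnion_smul hcover, g, hg⟩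
      obtain ⟨x, -, hx⟩ := Set.not_subset.1 hnotcover
      exact ⟨vecCons x g, hg.inv_mul_notMem_vecCons hS hx⟩
  obtain ⟨N, hN⟩ := ENNReal.exists_nat_gt (ENNReal.inv_ne_top.2 hpos.ne')
  obtain ⟨g, hg⟩ := hgrow N
  exact hnone ⟨N, hN.le, g, hg⟩

end Packing

section Chordal

variable {m n : Type*} [Fintype m] [Fintype n] [DecidableEq n]

def chordalProduct (X Y : Matrix m n ℂ) : ℝ :=
  (det (1 - (Xᴴ * Y) * (Yᴴ * X))).re

theorem chordalProduct_comm (X Y : Matrix m n ℂ) : chordalProduct X Y = chordalProduct Y X := by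
  rw [chordalProduct, det_one_sub_mul_comm, chordalProduct]

theorem chordalProduct_unitary_mul [DecidableEq m] (U : unitaryGroup m ℂ)
    (X Y : Matrix m n ℂ) :
    chordalProduct ((U : Matrix m m ℂ) * X) ((U : Matrix m m ℂ) * Y) = chordalProduct X Y := by
  have hcancel (Z W : Matrix m n ℂ) :
      ((U : Matrix m m ℂ) * Z)ᴴ * ((U : Matrix m m ℂ) * W) = Zᴴ * W := by
    rw [conjTranspose_mul, Matrix.mul_assoc, ← Matrix.mul_assoc _ (U : Matrix m m ℂ),
      ← star_eq_conjTranspose, UnitaryGroup.star_mul_self, Matrix.one_mul]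
  simp only [chordalProduct, hcancel]

theorem chordalProduct_mul_mul [DecidableEq m] (U V : unitaryGroup m ℂ) (X : Matrix m n ℂ) :
    chordalProduct ((U : Matrix m m ℂ) * X) ((V : Matrix m m ℂ) * X) =
      chordalProduct X (((U⁻¹ * V : unitaryGroup m ℂ) : Matrix m m ℂ) * X) := by
  rw [← chordalProduct_unitary_mul U X, ← Matrix.mul_assoc, ← UnitaryGroup.mul_val,
    mul_inv_cancel_left]

theorem inv_setOf_chordalProduct_le [DecidableEq m] (X : Matrix m n ℂ) (δ : ℝ) :
    {U : unitaryGroup m ℂ | chordalProduct X ((U : Matrix m m ℂ) * X) ≤ δ}⁻¹ =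
      {U : unitaryGroup m ℂ | chordalProduct X ((U : Matrix m m ℂ) * X) ≤ δ} := by
  ext U
  have h := chordalProduct_mul_mul U 1 X
  rw [UnitaryGroup.one_val, Matrix.one_mul, mul_one, chordalProduct_comm] at h
  simp only [Set.mem_inv, Set.mem_ofPred_eq, h]

omit [Fintype n] in
theorem unitary_mul_conjTranspose_mul_self [DecidableEq m] {X : Matrix m n ℂ} (hX : Xᴴ * X = 1)
    (U : unitaryGroup m ℂ) : ((U : Matrix m m ℂ) * X)ᴴ * ((U : Matrix m m ℂ) * X) = 1 := by
  rw [conjTranspose_mul, Matrix.mul_assoc, ← Matrix.mul_assoc _ (U : Matrix m m ℂ),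
    ← star_eq_conjTranspose, UnitaryGroup.star_mul_self, Matrix.one_mul, hX]

end Chordal

theorem stdFrame_conjTranspose_mul_self {T M : ℕ} (h : M ≤ T) :
    (stdFrame T M)ᴴ * stdFrame T M = 1 := by
  have hval : ∀ (k : Fin T) (j : Fin M), (k : ℕ) = j ↔ k = Fin.castLE h j := by
    simp [Fin.ext_iff]
  ext i j
  simp [stdFrame, mul_apply, one_apply, hval, eq_comm]

theorem gilbert_varshamov_chordal_product_general
    (T M : ℕ) (hTM : 2 * M ≤ T)
    (δ : ℝ)
    (μ : Measure (Matrix.unitaryGroup (Fin T) ℂ))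
    [IsProbabilityMeasure μ] [μ.IsMulLeftInvariant]
    (hc : 0 < μ {U : Matrix.unitaryGroup (Fin T) ℂ |
        ((1 - (stdFrame T M)ᴴ * (U : Matrix (Fin T) (Fin T) ℂ) * stdFrame T M *
            (stdFrame T M)ᴴ * (U : Matrix (Fin T) (Fin T) ℂ)ᴴ * stdFrame T M).det).re ≤ δ}) :
    ∃ K : ℕ,
      (μ {U : Matrix.unitaryGroup (Fin T) ℂ |
        ((1 - (stdFrame T M)ᴴ * (U : Matrix (Fin T) (Fin T) ℂ) * stdFrame T M *
            (stdFrame T M)ᴴ * (U : Matrix (Fin T) (Fin T) ℂ)ᴴ * stdFrame T M).det).re ≤ δ})⁻¹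
        ≤ (K : ENNReal) ∧
      ∃ X : Fin K → Matrix (Fin T) (Fin M) ℂ,
        (∀ i, (X i)ᴴ * X i = 1) ∧
        ∀ i j, i ≠ j → δ ≤ ((1 - (X i)ᴴ * X j * (X j)ᴴ * X i).det).re := by
  set E := stdFrame T M
  have hset : {U : unitaryGroup (Fin T) ℂ |
      ((1 - Eᴴ * (U : Matrix (Fin T) (Fin T) ℂ) * E *
        Eᴴ * (U : Matrix (Fin T) (Fin T) ℂ)ᴴ * E).det).re ≤ δ} =
        {U : unitaryGroup (Fin T) ℂ |
          chordalProduct E ((U : Matrix (Fin T) (Fin T) ℂ) * E) ≤ δ} := by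
    simp only [chordalProduct, conjTranspose_mul, Matrix.mul_assoc]
  rw [hset] at hc ⊢
  obtain ⟨K, hK, g, hg⟩ := exists_pairwise_inv_mul_notMem (inv_setOf_chordalProduct_le E δ) hc
  refine ⟨K, hK, fun i => (g i : Matrix (Fin T) (Fin T) ℂ) * E,
    fun i => unitary_mul_conjTranspose_mul_self (stdFrame_conjTranspose_mul_self (by omega)) (g i),
    fun i j hij => ?_⟩
  have hfar : δ < chordalProduct ((g i : Matrix (Fin T) (Fin T) ℂ) * E)
      ((g j : Matrix (Fin T) (Fin T) ℂ) * E) := by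
    rw [chordalProduct_mul_mul]
    exact lt_of_not_ge (hg hij)
  simpa only [chordalProduct, Matrix.mul_assoc] using hfar.le

theorem gilbert_varshamov_chordal_product
    (T M : ℕ) (hT : 0 < T) (hM : 0 < M) (hTM : 2 * M ≤ T)
    (δ : ℝ) (hδ0 : 0 < δ) (hδ1 : δ < 1)
    (μ : Measure (Matrix.unitaryGroup (Fin T) ℂ))
    [IsProbabilityMeasure μ] [μ.IsMulLeftInvariant]
    (hc : 0 < μ {U : Matrix.unitaryGroup (Fin T) ℂ |
        ((1 - (stdFrame T M)ᴴ * (U : Matrix (Fin T) (Fin T) ℂ) * stdFrame T M *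
            (stdFrame T M)ᴴ * (U : Matrix (Fin T) (Fin T) ℂ)ᴴ * stdFrame T M).det).re ≤ δ}) :
    ∃ K : ℕ,
      (μ {U : Matrix.unitaryGroup (Fin T) ℂ |
        ((1 - (stdFrame T M)ᴴ * (U : Matrix (Fin T) (Fin T) ℂ) * stdFrame T M *
            (stdFrame T M)ᴴ * (U : Matrix (Fin T) (Fin T) ℂ)ᴴ * stdFrame T M).det).re ≤ δ})⁻¹
        ≤ (K : ENNReal) ∧
      ∃ X : Fin K → Matrix (Fin T) (Fin M) ℂ,
        (∀ i, (X i)ᴴ * X i = 1) ∧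
        ∀ i j, i ≠ j → δ ≤ ((1 - (X i)ᴴ * X j * (X j)ᴴ * X i).det).re :=
  gilbert_varshamov_chordal_product_general T M hTM δ μ hc
end

section
/- Let T ≥ 2 be an integer and let δ ∈ (0,1). Then there exist an integer K with K ≥ δ^{−(T−1)} and unit vectors x_1, …, x_K ∈ ℂ^T such that 1 − |⟨x_i, x_j⟩|² ≥ δ for all i ≠ j; equivalently, |⟨x_i, x_j⟩|² ≤ 1 − δ for all i ≠ j. -/
/-!
Greedy packing against a volume bound. For a unit vector `x`, let `C_x` be the set of points `v`
of the open unit ball with `1 - |⟨x, v / ‖v‖⟩|² < δ`. Splitting `v` along `ℂx ⊕ (ℂx)ᗮ`, the slice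
of `C_x` over `w ∈ (ℂx)ᗮ` is a planar annulus with the same area as the slice of the ball over
`w / √δ`, so rescaling the `2(T-1)`-dimensional factor gives `vol C_x = δ^(T-1) vol B`. Hence
fewer than `δ^(-(T-1))` caps cannot cover the ball, and an uncovered point gives a new unit vector
at squared chordal distance at least `δ` from all those chosen so far.
-/

open MeasureTheory Measure Metric Module InnerProductSpace

section Annulus

variable {U : Type*} [NormedAddCommGroup U] [NormedSpace ℝ U] [MeasurableSpace U] [BorelSpace U]
  [FiniteDimensional ℝ U] (μ : Measure U) [μ.IsAddHaarMeasure]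

theorem addHaar_setOf_sq_norm_lt (hU : finrank ℝ U = 2) (b : ℝ) :
    μ {u | ‖u‖ ^ 2 < b} = ENNReal.ofReal b * μ (ball 0 1) := by
  rcases le_or_gt b 0 with hb | hb
  · have : {u : U | ‖u‖ ^ 2 < b} = ∅ :=
      Set.eq_empty_of_forall_notMem fun u hu => (hu.trans_le hb).not_ge (by positivity)
    simp [this, ENNReal.ofReal_of_nonpos hb]
  · have : {u : U | ‖u‖ ^ 2 < b} = ball 0 √b := by
      ext u
      simp [Real.lt_sqrt (norm_nonneg u)]
    rw [this, addHaar_ball_of_pos μ _ (Real.sqrt_pos.2 hb), hU, Real.sq_sqrt hb.le]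

theorem addHaar_setOf_sq_norm_le (hU : finrank ℝ U = 2) {a : ℝ} (ha : 0 ≤ a) :
    μ {u | ‖u‖ ^ 2 ≤ a} = ENNReal.ofReal a * μ (ball 0 1) := by
  have : {u : U | ‖u‖ ^ 2 ≤ a} = closedBall 0 √a := by
    ext u
    simp [Real.le_sqrt (norm_nonneg u) ha]
  rw [this, addHaar_closedBall μ _ (Real.sqrt_nonneg a), hU, Real.sq_sqrt ha]

theorem addHaar_annulus (hU : finrank ℝ U = 2) {a : ℝ} (ha : 0 ≤ a) (b : ℝ) :
    μ {u | a < ‖u‖ ^ 2 ∧ ‖u‖ ^ 2 < b} = ENNReal.ofReal (b - a) * μ (ball 0 1) := by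
  rcases le_or_gt b a with hab | hab
  · have : {u : U | a < ‖u‖ ^ 2 ∧ ‖u‖ ^ 2 < b} = ∅ :=
      Set.eq_empty_of_forall_notMem fun u hu => (hu.1.trans hu.2).not_ge hab
    simp [this, ENNReal.ofReal_of_nonpos (sub_nonpos.2 hab)]
  have hdiff : {u : U | a < ‖u‖ ^ 2 ∧ ‖u‖ ^ 2 < b} = {u | ‖u‖ ^ 2 < b} \ {u | ‖u‖ ^ 2 ≤ a} := by
    ext u
    simp [and_comm]
  have hsub : {u : U | ‖u‖ ^ 2 ≤ a} ⊆ {u | ‖u‖ ^ 2 < b} := fun u hu => lt_of_le_of_lt hu hab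
  rw [hdiff, measure_sdiff hsub (measurableSet_le (by fun_prop) measurable_const).nullMeasurableSet
      (by simp [addHaar_setOf_sq_norm_le μ hU ha, ENNReal.mul_eq_top, measure_ball_lt_top.ne]),
    addHaar_setOf_sq_norm_lt μ hU, addHaar_setOf_sq_norm_le μ hU ha,
    ← ENNReal.sub_mul (fun _ _ => measure_ball_lt_top.ne), ENNReal.ofReal_sub _ ha]

end Annulus

theorem MeasureTheory.Measure.lintegral_comp_inv_smul {E : Type*} [NormedAddCommGroup E]
    [NormedSpace ℝ E] [MeasurableSpace E] [BorelSpace E] [FiniteDimensional ℝ E]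
    (μ : Measure E) [μ.IsAddHaarMeasure] (f : E → ENNReal) {r : ℝ} (hr : 0 < r) :
    ∫⁻ x, f (r⁻¹ • x) ∂μ = ENNReal.ofReal (r ^ finrank ℝ E) * ∫⁻ x, f x ∂μ := by
  have hr' : r⁻¹ ≠ 0 := inv_ne_zero hr.ne'
  have h := lintegral_map_equiv f (μ := μ) (Homeomorph.smulOfNeZero r⁻¹ hr').toMeasurableEquiv
  simp only [Homeomorph.toMeasurableEquiv_coe, Homeomorph.smulOfNeZero_apply] at h
  rw [← h, map_addHaar_smul μ hr', lintegral_smul_measure, inv_pow, inv_inv,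
    abs_of_pos (pow_pos hr _), smul_eq_mul]

section ProductCap

variable {U V : Type*} [NormedAddCommGroup U] [NormedSpace ℝ U] [MeasurableSpace U] [BorelSpace U]
  [FiniteDimensional ℝ U] [NormedAddCommGroup V] [NormedSpace ℝ V] [MeasurableSpace V]
  [BorelSpace V] [FiniteDimensional ℝ V] (μ : Measure U) [μ.IsAddHaarMeasure]
  (ν : Measure V) [ν.IsAddHaarMeasure]

theorem addHaar_prod_cap (hU : finrank ℝ U = 2) {δ : ℝ} (hδ0 : 0 < δ) (hδ1 : δ ≤ 1) :
    μ.prod ν {p | ‖p.1‖ ^ 2 + ‖p.2‖ ^ 2 < 1 ∧ (1 - δ) * (‖p.1‖ ^ 2 + ‖p.2‖ ^ 2) < ‖p.1‖ ^ 2}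
      = ENNReal.ofReal (√δ ^ finrank ℝ V) * μ.prod ν {p | ‖p.1‖ ^ 2 + ‖p.2‖ ^ 2 < 1} := by
  -- Both slices have area proportional to `1 - ‖w‖² / δ`, as planar areas are linear in the
  -- squared radius.
  have hsection : ∀ w : V,
      μ {u | ‖u‖ ^ 2 + ‖w‖ ^ 2 < 1 ∧ (1 - δ) * (‖u‖ ^ 2 + ‖w‖ ^ 2) < ‖u‖ ^ 2}
        = μ {u | ‖u‖ ^ 2 + ‖(√δ)⁻¹ • w‖ ^ 2 < 1} := by
    intro w
    have hcap : {u : U | ‖u‖ ^ 2 + ‖w‖ ^ 2 < 1 ∧ (1 - δ) * (‖u‖ ^ 2 + ‖w‖ ^ 2) < ‖u‖ ^ 2}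
        = {u | (1 - δ) / δ * ‖w‖ ^ 2 < ‖u‖ ^ 2 ∧ ‖u‖ ^ 2 < 1 - ‖w‖ ^ 2} := by
      ext u
      simp only [Set.mem_ofPred_eq, div_mul_eq_mul_div, div_lt_iff₀ hδ0]
      constructor <;> rintro ⟨h1, h2⟩ <;> constructor <;> linarith
    have hball : {u : U | ‖u‖ ^ 2 + ‖(√δ)⁻¹ • w‖ ^ 2 < 1} = {u | ‖u‖ ^ 2 < 1 - ‖w‖ ^ 2 / δ} := by
      ext u
      simp only [Set.mem_ofPred_eq, norm_smul, mul_pow, norm_inv, Real.norm_eq_abs,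
        abs_of_pos (Real.sqrt_pos.2 hδ0), inv_pow, Real.sq_sqrt hδ0.le]
      constructor <;> intro h <;> linarith [inv_mul_eq_div δ (‖w‖ ^ 2)]
    rw [hcap, hball, addHaar_annulus μ hU (by have := sub_nonneg.2 hδ1; positivity),
      addHaar_setOf_sq_norm_lt μ hU]
    congr 2
    field_simp
    ring
  rw [prod_apply_symm (by measurability), prod_apply_symm (by measurability),
    ← lintegral_comp_inv_smul ν _ (Real.sqrt_pos.2 hδ0)]
  exact lintegral_congr fun w => hsection w

end ProductCap

section ChordalCap

variable {E : Type*} [NormedAddCommGroup E] [InnerProductSpace ℂ E]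

def chordalCap (x : E) (δ : ℝ) : Set E :=
  {v | ‖v‖ < 1 ∧ (1 - δ) * ‖v‖ ^ 2 < ‖⟪x, v⟫_ℂ‖ ^ 2}

theorem norm_orthogonalProjectionOnto_span_singleton {x : E} (hx : ‖x‖ = 1) (v : E) :
    ‖(ℂ ∙ x).orthogonalProjectionOnto v‖ = ‖⟪x, v⟫_ℂ‖ := by
  rw [Submodule.coe_norm, ← Submodule.starProjection_apply, Submodule.starProjection_singleton,
    hx]
  simp [norm_smul, hx]

variable [FiniteDimensional ℂ E] [MeasurableSpace E] [BorelSpace E] (μ : Measure E)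
  [μ.IsAddHaarMeasure]

theorem addHaar_chordalCap {x : E} (hx : ‖x‖ = 1) {δ : ℝ} (hδ0 : 0 < δ) (hδ1 : δ ≤ 1) :
    μ (chordalCap x δ) = ENNReal.ofReal (δ ^ (finrank ℂ E - 1)) * μ (ball 0 1) := by
  have hx0 : x ≠ 0 := norm_ne_zero_iff.1 (by rw [hx]; exact one_ne_zero)
  let K := ℂ ∙ x
  let Φ : E ≃L[ℝ] K × Kᗮ :=
    ((K.orthogonalDecomposition.toLinearEquiv.trans
      (WithLp.linearEquiv 2 ℂ (K × Kᗮ))).restrictScalars ℝ).toContinuousLinearEquiv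
  have hΦ : ∀ v, Φ v = (K.orthogonalProjectionOnto v, Kᗮ.orthogonalProjectionOnto v) := fun v => by
    simp [Φ]
  have : IsAddHaarMeasure (μ.map Φ) := Φ.isAddHaarMeasure_map μ
  have hc :=
    isAddLeftInvariant_eq_smul (μ.map Φ) ((addHaar : Measure K).prod (addHaar : Measure Kᗮ))
  have hK : finrank ℝ K = 2 := by rw [finrank_real_of_complex, finrank_span_singleton hx0]
  have hKperp : finrank ℝ Kᗮ = 2 * (finrank ℂ E - 1) := by
    rw [finrank_real_of_complex, ← Submodule.finrank_add_finrank_orthogonal K,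
      finrank_span_singleton hx0]
    omega
  have hcap : chordalCap x δ = Φ ⁻¹' {p | ‖p.1‖ ^ 2 + ‖p.2‖ ^ 2 < 1 ∧
      (1 - δ) * (‖p.1‖ ^ 2 + ‖p.2‖ ^ 2) < ‖p.1‖ ^ 2} := by
    ext v
    simp only [chordalCap, Set.mem_preimage, Set.mem_ofPred_eq, hΦ,
      ← K.norm_sq_eq_add_norm_sq_projection, sq_lt_one_iff₀ (norm_nonneg v)]
    rw [norm_orthogonalProjectionOnto_span_singleton hx]
  have hball : ball (0 : E) 1 = Φ ⁻¹' {p | ‖p.1‖ ^ 2 + ‖p.2‖ ^ 2 < 1} := by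
    ext v
    simp only [mem_ball_zero_iff, Set.mem_preimage, Set.mem_ofPred_eq, hΦ,
      ← K.norm_sq_eq_add_norm_sq_projection, sq_lt_one_iff₀ (norm_nonneg v)]
  have hmeas : Measurable fun p : K × Kᗮ => ‖p.1‖ ^ 2 + ‖p.2‖ ^ 2 := by fun_prop
  have hballS : MeasurableSet {p : K × Kᗮ | ‖p.1‖ ^ 2 + ‖p.2‖ ^ 2 < 1} :=
    measurableSet_lt hmeas measurable_const
  have hcapS : MeasurableSet {p : K × Kᗮ | ‖p.1‖ ^ 2 + ‖p.2‖ ^ 2 < 1 ∧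
      (1 - δ) * (‖p.1‖ ^ 2 + ‖p.2‖ ^ 2) < ‖p.1‖ ^ 2} :=
    hballS.inter (measurableSet_lt (hmeas.const_mul _) (by fun_prop))
  rw [hcap, hball, ← map_apply Φ.continuous.measurable hcapS,
    ← map_apply Φ.continuous.measurable hballS, hc, Measure.smul_apply, Measure.smul_apply,
    addHaar_prod_cap _ _ hK hδ0 hδ1, hKperp, pow_mul, Real.sq_sqrt hδ0.le, mul_smul_comm]

end ChordalCap

section Packing

variable {E : Type*} [NormedAddCommGroup E] [InnerProductSpace ℂ E] {δ : ℝ}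

theorem ball_subset_insert_biUnion_chordalCap {s : Finset E}
    (hcover : ∀ y : E, ‖y‖ = 1 → ∃ x ∈ s, 1 - δ < ‖⟪x, y⟫_ℂ‖ ^ 2) :
    ball (0 : E) 1 ⊆ insert 0 (⋃ x ∈ s, chordalCap x δ) := by
  intro v hv
  rcases eq_or_ne v 0 with rfl | hv0
  · exact Set.mem_insert _ _
  obtain ⟨x, hxs, hx⟩ := hcover _ (norm_smul_inv_norm (𝕜 := ℂ) hv0)
  rw [inner_smul_right, norm_mul, norm_inv, RCLike.norm_ofReal, abs_norm, mul_pow, inv_pow,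
    inv_mul_eq_div, lt_div_iff₀ (by positivity)] at hx
  exact Set.mem_insert_of_mem _ (Set.mem_biUnion hxs ⟨mem_ball_zero_iff.1 hv, hx⟩)

variable [FiniteDimensional ℂ E] [Nontrivial E]

theorem one_le_card_mul_pow_of_ball_subset [MeasurableSpace E] [BorelSpace E] (μ : Measure E)
    [μ.IsAddHaarMeasure] (hδ0 : 0 < δ) (hδ1 : δ ≤ 1) {s : Finset E} (hs : ∀ x ∈ s, ‖x‖ = 1)
    (hcover : ball (0 : E) 1 ⊆ insert 0 (⋃ x ∈ s, chordalCap x δ)) :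
    1 ≤ s.card * δ ^ (finrank ℂ E - 1) := by
  have hball : μ (ball 0 1) ≤ ENNReal.ofReal (s.card * δ ^ (finrank ℂ E - 1)) * μ (ball 0 1) :=
    calc μ (ball 0 1)
        ≤ μ (⋃ x ∈ s, chordalCap x δ) :=
          (measure_mono hcover).trans_eq (measure_congr (insert_ae_eq_self _ _))
      _ ≤ ∑ x ∈ s, μ (chordalCap x δ) := measure_biUnion_finset_le _ _
      _ = ∑ x ∈ s, ENNReal.ofReal (δ ^ (finrank ℂ E - 1)) * μ (ball 0 1) :=
          Finset.sum_congr rfl fun x hx => addHaar_chordalCap μ (hs x hx) hδ0 hδ1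
      _ = ENNReal.ofReal (s.card * δ ^ (finrank ℂ E - 1)) * μ (ball 0 1) := by
          rw [Finset.sum_const, nsmul_eq_mul, ← mul_assoc, ENNReal.ofReal_mul (by positivity),
            ENNReal.ofReal_natCast]
  rw [← ENNReal.one_le_ofReal]
  exact (ENNReal.mul_le_mul_iff_left (measure_ball_pos μ 0 one_pos).ne'
    measure_ball_lt_top.ne).1 (by rwa [one_mul])

theorem exists_norm_eq_one_forall_le_one_sub_sq_norm_inner (hδ0 : 0 < δ) (hδ1 : δ ≤ 1)
    {s : Finset E} (hs : ∀ x ∈ s, ‖x‖ = 1) (hcard : s.card * δ ^ (finrank ℂ E - 1) < 1) :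
    ∃ y : E, ‖y‖ = 1 ∧ ∀ x ∈ s, δ ≤ 1 - ‖⟪x, y⟫_ℂ‖ ^ 2 := by
  by_contra! h
  borelize E
  refine hcard.not_ge (one_le_card_mul_pow_of_ball_subset addHaar hδ0 hδ1 hs
    (ball_subset_insert_biUnion_chordalCap fun y hy => ?_))
  obtain ⟨x, hxs, hx⟩ := h y hy
  exact ⟨x, hxs, by linarith⟩

end Packing

section ChordalCode

variable {E : Type*} [NormedAddCommGroup E] [InnerProductSpace ℂ E]

def IsChordalCode (δ : ℝ) (s : Set E) : Prop :=
  (∀ x ∈ s, ‖x‖ = 1) ∧ s.Pairwise fun x y => δ ≤ 1 - ‖⟪x, y⟫_ℂ‖ ^ 2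

variable [FiniteDimensional ℂ E] [Nontrivial E] {δ : ℝ}

theorem exists_isChordalCode_card_eq (hδ0 : 0 < δ) (hδ1 : δ ≤ 1) :
    ∀ k : ℕ, ((k : ℝ) - 1) * δ ^ (finrank ℂ E - 1) < 1 →
      ∃ s : Finset E, s.card = k ∧ IsChordalCode δ (s : Set E)
  | 0, _ => ⟨∅, rfl, by simp [IsChordalCode]⟩
  | k + 1, hk => by
    classical
    have hpow : 0 ≤ δ ^ (finrank ℂ E - 1) := by positivity
    push_cast at hk
    rw [add_sub_cancel_right] at hk
    obtain ⟨s, rfl, hunit, hpair⟩ :=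
      exists_isChordalCode_card_eq hδ0 hδ1 k (by nlinarith)
    obtain ⟨y, hy, hfar⟩ := exists_norm_eq_one_forall_le_one_sub_sq_norm_inner hδ0 hδ1 hunit hk
    have hys : y ∉ s := fun hys => by
      have := hfar y hys
      rw [inner_self_eq_norm_sq_to_K, hy] at this
      norm_num at this
      linarith
    refine ⟨insert y s, Finset.card_insert_of_notMem hys, ?_, ?_⟩
    · simpa [hy] using hunit
    · rw [Finset.coe_insert, Set.pairwise_insert]
      exact ⟨hpair, fun x hx _ => ⟨by rw [norm_inner_symm]; exact hfar x hx, hfar x hx⟩⟩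

theorem exists_isChordalCode_inv_pow_le_card (hδ0 : 0 < δ) (hδ1 : δ ≤ 1) :
    ∃ s : Finset E, (δ ^ (finrank ℂ E - 1))⁻¹ ≤ s.card ∧ IsChordalCode δ (s : Set E) := by
  set a := δ ^ (finrank ℂ E - 1)
  have ha : 0 < a := by positivity
  obtain ⟨s, hs, hcode⟩ := exists_isChordalCode_card_eq hδ0 hδ1 ⌈a⁻¹⌉₊ <| by
    have := Nat.ceil_lt_add_one (inv_nonneg.2 ha.le)
    calc ((⌈a⁻¹⌉₊ : ℝ) - 1) * a < a⁻¹ * a := by gcongr; linarith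
      _ = 1 := inv_mul_cancel₀ ha.ne'
  exact ⟨s, hs ▸ Nat.le_ceil _, hcode⟩

end ChordalCode

theorem gilbert_varshamov_projective
    (T : ℕ) (hT : 2 ≤ T) (δ : ℝ) (hδ0 : 0 < δ) (hδ1 : δ < 1) :
    ∃ K : ℕ, (δ ^ (T - 1))⁻¹ ≤ (K : ℝ) ∧
      ∃ x : Fin K → EuclideanSpace ℂ (Fin T),
        (∀ i, ‖x i‖ = 1) ∧
        ∀ i j, i ≠ j → δ ≤ 1 - ‖(inner ℂ (x i) (x j) : ℂ)‖ ^ 2 := by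
  have : Nonempty (Fin T) := ⟨⟨0, by omega⟩⟩
  obtain ⟨s, hcard, hunit, hpair⟩ :=
    exists_isChordalCode_inv_pow_le_card (E := EuclideanSpace ℂ (Fin T)) hδ0 hδ1.le
  rw [finrank_euclideanSpace_fin] at hcard
  let x : Fin s.card → EuclideanSpace ℂ (Fin T) := fun i => s.equivFin.symm i
  refine ⟨s.card, hcard, x, fun i => hunit _ (s.equivFin.symm i).2, fun i j hij => ?_⟩
  exact hpair (s.equivFin.symm i).2 (s.equivFin.symm j).2
    fun h => hij (s.equivFin.symm.injective (Subtype.ext h))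
end
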